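/- There exists a constant C > 0 such that for all real numbers λ, μ ≥ 0 and all ξ, η ∈ Matrix (Fin 3) (Fin 3) ℝ, |F_{λ,μ}(ξ) − F_{λ,μ}(η)| ≤ C(λ+μ)(1 + ‖ξ‖² + ‖η‖²)^{3/2}‖ξ − η‖, where F_{λ,μ}(ξ) := (λ/2)·(tr Ẽ(ξ))² + μ·‖Ẽ(ξ)‖² and Ẽ(ξ) := (1/2)(ξ + ξᵀ + ξᵀξ). -/

import Mathlib

open Matrix

/-- The Frobenius norm of a real matrix: `‖ξ‖ = (tr(ξᵀξ))^(1/2)`. -/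
noncomputable def frobNorm {M N : ℕ} (ξ : Matrix (Fin M) (Fin N) ℝ) : ℝ :=
  Real.sqrt ((ξᵀ * ξ).trace)

/-- The Green-Saint Venant strain tensor `Ẽ(ξ) = (1/2)(ξ + ξᵀ + ξᵀξ)`. -/
noncomputable def Etil (ξ : Matrix (Fin 3) (Fin 3) ℝ) : Matrix (Fin 3) (Fin 3) ℝ :=
  (1 / 2 : ℝ) • (ξ + ξᵀ + ξᵀ * ξ)

/-- The Saint Venant–Kirchhoff hyper-elastic energy density with Lamé
coefficients `l, m`: `F(ξ) = (l/2)(tr Ẽ(ξ))² + m‖Ẽ(ξ)‖²`. -/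
noncomputable def Fsvk (l m : ℝ) (ξ : Matrix (Fin 3) (Fin 3) ℝ) : ℝ :=
  l / 2 * (Etil ξ).trace ^ 2 + m * frobNorm (Etil ξ) ^ 2

/-!
Since `F` is a quadratic form in the strain `Ẽ(ξ)`, it is locally Lipschitz in `Ẽ` with constant
`≲ (λ + μ)(‖Ẽ(ξ)‖ + ‖Ẽ(η)‖)`. The strain grows quadratically, `‖Ẽ(ξ)‖ ≤ ‖ξ‖ + ‖ξ‖²/2`, and is
locally Lipschitz with constant `1 + (‖ξ‖ + ‖η‖)/2`; the two factors are bounded by `S` and `2√S`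
for `S = 1 + ‖ξ‖² + ‖η‖²`, which gives the power `S^{3/2}`.
-/

open scoped Matrix.Norms.Frobenius

lemma frobNorm_eq_norm {M N : ℕ} (ξ : Matrix (Fin M) (Fin N) ℝ) : frobNorm ξ = ‖ξ‖ := by
  rw [frobNorm, frobenius_norm_def, Real.sqrt_eq_rpow]
  congr 1
  simp only [trace, diag, mul_apply, transpose_apply, Real.rpow_two, Real.norm_eq_abs, sq_abs]
  rw [Finset.sum_comm]
  simp [pow_two]

lemma abs_sq_sub_sq_le (a b : ℝ) : |a ^ 2 - b ^ 2| ≤ (|a| + |b|) * |a - b| := by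
  rw [sq_sub_sq, abs_mul]
  gcongr
  exact abs_add_le a b

lemma abs_norm_sq_sub_norm_sq_le {E : Type*} [SeminormedAddCommGroup E] (x y : E) :
    |‖x‖ ^ 2 - ‖y‖ ^ 2| ≤ (‖x‖ + ‖y‖) * ‖x - y‖ := by
  calc |‖x‖ ^ 2 - ‖y‖ ^ 2| ≤ (|‖x‖| + |‖y‖|) * |‖x‖ - ‖y‖| := abs_sq_sub_sq_le _ _
    _ ≤ (‖x‖ + ‖y‖) * ‖x - y‖ := by
        rw [abs_norm, abs_norm]
        gcongr
        exact abs_norm_sub_norm_le x y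

section Frobenius

variable {n α : Type*} [Fintype n]

lemma norm_entry_le_frobenius_norm {m : Type*} [Fintype m] [SeminormedAddCommGroup α]
    (A : Matrix m n α) (i : m) (j : n) : ‖A i j‖ ≤ ‖A‖ :=
  calc ‖A i j‖ ≤ ‖WithLp.toLp 2 (A i)‖ := PiLp.norm_apply_le (WithLp.toLp 2 (A i)) j
    _ ≤ ‖A‖ := PiLp.norm_apply_le (WithLp.toLp 2 fun i => WithLp.toLp 2 (A i)) i

lemma norm_trace_le_card_mul_frobenius_norm [SeminormedAddCommGroup α] (A : Matrix n n α) :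
    ‖A.trace‖ ≤ Fintype.card n * ‖A‖ :=
  calc ‖A.trace‖ ≤ ∑ i, ‖A i i‖ := norm_sum_le _ _
    _ ≤ ∑ _i : n, ‖A‖ := Finset.sum_le_sum fun i _ => norm_entry_le_frobenius_norm A i i
    _ = Fintype.card n * ‖A‖ := by simp

lemma abs_trace_sq_sub_trace_sq_le (P Q : Matrix n n ℝ) :
    |P.trace ^ 2 - Q.trace ^ 2| ≤ (Fintype.card n) ^ 2 * (‖P‖ + ‖Q‖) * ‖P - Q‖ := by
  have hP := norm_trace_le_card_mul_frobenius_norm P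
  have hQ := norm_trace_le_card_mul_frobenius_norm Q
  have hPQ := norm_trace_le_card_mul_frobenius_norm (P - Q)
  rw [trace_sub] at hPQ
  simp only [Real.norm_eq_abs] at hP hQ hPQ
  calc |P.trace ^ 2 - Q.trace ^ 2| ≤ (|P.trace| + |Q.trace|) * |P.trace - Q.trace| :=
        abs_sq_sub_sq_le _ _
    _ ≤ (Fintype.card n * ‖P‖ + Fintype.card n * ‖Q‖) * (Fintype.card n * ‖P - Q‖) := by
        gcongr
    _ = _ := by ring

end Frobenius

lemma abs_Fsvk_sub_Fsvk_le {l m : ℝ} (hl : 0 ≤ l) (hm : 0 ≤ m) (ξ η : Matrix (Fin 3) (Fin 3) ℝ) :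
    |Fsvk l m ξ - Fsvk l m η| ≤
      5 * (l + m) * ((‖Etil ξ‖ + ‖Etil η‖) * ‖Etil ξ - Etil η‖) := by
  have hF : Fsvk l m ξ - Fsvk l m η = l / 2 * ((Etil ξ).trace ^ 2 - (Etil η).trace ^ 2) +
      m * (‖Etil ξ‖ ^ 2 - ‖Etil η‖ ^ 2) := by
    rw [Fsvk, Fsvk, frobNorm_eq_norm, frobNorm_eq_norm]; ring
  set P := Etil ξ
  set Q := Etil η
  have htr := abs_trace_sq_sub_trace_sq_le P Q
  have hnorm := abs_norm_sq_sub_norm_sq_le P Q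
  simp only [Fintype.card_fin] at htr
  have hPQ : 0 ≤ (‖P‖ + ‖Q‖) * ‖P - Q‖ := by positivity
  calc |Fsvk l m ξ - Fsvk l m η|
      ≤ l / 2 * |P.trace ^ 2 - Q.trace ^ 2| + m * |‖P‖ ^ 2 - ‖Q‖ ^ 2| := by
        rw [hF]
        refine (abs_add_le _ _).trans ?_
        rw [abs_mul, abs_mul, abs_of_nonneg (by positivity : 0 ≤ l / 2), abs_of_nonneg hm]
    _ ≤ l / 2 * (3 ^ 2 * (‖P‖ + ‖Q‖) * ‖P - Q‖) + m * ((‖P‖ + ‖Q‖) * ‖P - Q‖) := by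
        gcongr
        exact_mod_cast htr
    _ ≤ 5 * (l + m) * ((‖P‖ + ‖Q‖) * ‖P - Q‖) := by nlinarith

lemma norm_Etil_le (ξ : Matrix (Fin 3) (Fin 3) ℝ) : ‖Etil ξ‖ ≤ ‖ξ‖ + ‖ξ‖ ^ 2 / 2 := by
  have h : ‖ξ + ξᵀ + ξᵀ * ξ‖ ≤ ‖ξ‖ + ‖ξ‖ + ‖ξ‖ * ‖ξ‖ :=
    calc ‖ξ + ξᵀ + ξᵀ * ξ‖ ≤ ‖ξ‖ + ‖ξᵀ‖ + ‖ξᵀ‖ * ‖ξ‖ :=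
          norm_add₃_le.trans (by gcongr; exact frobenius_norm_mul _ _)
      _ = _ := by rw [frobenius_norm_transpose]
  rw [Etil, norm_smul, Real.norm_of_nonneg (by norm_num)]
  linarith

lemma Etil_sub_Etil (ξ η : Matrix (Fin 3) (Fin 3) ℝ) :
    Etil ξ - Etil η = (1 / 2 : ℝ) • ((ξ - η) + (ξ - η)ᵀ + (ξᵀ * (ξ - η) + (ξ - η)ᵀ * η)) := by
  simp only [Etil, ← smul_sub, transpose_sub, Matrix.sub_mul, Matrix.mul_sub]
  congr 1
  noncomm_ring

lemma norm_Etil_sub_Etil_le (ξ η : Matrix (Fin 3) (Fin 3) ℝ) :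
    ‖Etil ξ - Etil η‖ ≤ (1 + (‖ξ‖ + ‖η‖) / 2) * ‖ξ - η‖ := by
  have h : ‖(ξ - η) + (ξ - η)ᵀ + (ξᵀ * (ξ - η) + (ξ - η)ᵀ * η)‖ ≤
      ‖ξ - η‖ + ‖ξ - η‖ + (‖ξ‖ * ‖ξ - η‖ + ‖ξ - η‖ * ‖η‖) :=
    calc _ ≤ ‖ξ - η‖ + ‖(ξ - η)ᵀ‖ + (‖ξᵀ‖ * ‖ξ - η‖ + ‖(ξ - η)ᵀ‖ * ‖η‖) :=
          norm_add₃_le.trans (by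
            gcongr
            exact (norm_add_le _ _).trans
              (add_le_add (frobenius_norm_mul _ _) (frobenius_norm_mul _ _)))
      _ = _ := by simp only [frobenius_norm_transpose]
  rw [Etil_sub_Etil, norm_smul, Real.norm_of_nonneg (by norm_num)]
  linarith

lemma rpow_three_halves_eq_mul_sqrt {S : ℝ} (hS : 0 ≤ S) : S ^ ((3 : ℝ) / 2) = S * √S := by
  rw [show (3 : ℝ) / 2 = 1 + 1 / 2 by norm_num, Real.rpow_add' hS (by norm_num), Real.rpow_one,
    Real.sqrt_eq_rpow]

/-- The first Lipschitz estimate established in the proof of Example 2 for the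
Saint Venant–Kirchhoff density. -/
theorem svk_first_lipschitz_estimate :
    ∃ C : ℝ, 0 < C ∧ ∀ l m : ℝ, 0 ≤ l → 0 ≤ m →
      ∀ ξ η : Matrix (Fin 3) (Fin 3) ℝ,
        |Fsvk l m ξ - Fsvk l m η| ≤
          C * (l + m) * (1 + frobNorm ξ ^ 2 + frobNorm η ^ 2) ^ ((3 : ℝ) / 2) *
            frobNorm (ξ - η) := by
  refine ⟨10, by norm_num, fun l m hl hm ξ η => ?_⟩
  simp only [frobNorm_eq_norm]
  set S := 1 + ‖ξ‖ ^ 2 + ‖η‖ ^ 2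
  have hS : 0 ≤ S := by positivity
  have hsum : ‖Etil ξ‖ + ‖Etil η‖ ≤ S := by
    nlinarith [norm_Etil_le ξ, norm_Etil_le η, sq_nonneg (‖ξ‖ - 1), sq_nonneg (‖η‖ - 1)]
  have hlip : 1 + (‖ξ‖ + ‖η‖) / 2 ≤ 2 * √S := by
    nlinarith [Real.sq_sqrt hS, Real.sqrt_nonneg S, norm_nonneg ξ, norm_nonneg η,
      sq_nonneg (‖ξ‖ - ‖η‖), sq_nonneg (‖ξ‖ + ‖η‖ - 2)]
  calc |Fsvk l m ξ - Fsvk l m η|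
      ≤ 5 * (l + m) * ((‖Etil ξ‖ + ‖Etil η‖) * ‖Etil ξ - Etil η‖) := abs_Fsvk_sub_Fsvk_le hl hm ξ η
    _ ≤ 5 * (l + m) * (S * ((2 * √S) * ‖ξ - η‖)) := by
        gcongr
        exact (norm_Etil_sub_Etil_le ξ η).trans (by gcongr)
    _ = 10 * (l + m) * S ^ ((3 : ℝ) / 2) * ‖ξ - η‖ := by
        rw [rpow_three_halves_eq_mul_sqrt hS]; ring
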